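/- Let H be a Hopf algebra over a field k and N ⊆ P a cleft extension with cleaving map γ. Then H ⊗ N becomes an associative unital algebra H #^γ N with product (h ⊗ n)(g ⊗ m) = h₍₁₎g₍₁₎ ⊗ γ⁻¹(h₍₂₎g₍₂₎) γ(h₍₃₎) n γ(g₍₃₎) m and unit 1 ⊗ 1, and the map Φ : P → H #^γ N, Φ(p) = p₍₋₂₎ ⊗ γ⁻¹(p₍₋₁₎)p₍₀₎, is an isomorphism of left H-comodule algebras. -/
import Mathlib

set_option synthInstance.maxHeartbeats 1000000
set_option maxHeartbeats 4000000


open TensorProduct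

noncomputable section

section Defs

variable (k : Type*) [Field k] (H : Type*) [Ring H] [Bialgebra k H]
  (P : Type*) [Ring P] [Algebra k P]

/-- The coinvariant submodule `N = P^{coH}`. -/
def coinvSub (δ : P →ₗ[k] H ⊗[k] P) : Submodule k P :=
  LinearMap.ker (δ - TensorProduct.mk k H P 1)

/-- Iterated comultiplication `h ↦ h₁ ⊗ (h₂ ⊗ h₃)`. -/
def comul3R : H →ₗ[k] H ⊗[k] (H ⊗[k] H) :=
  TensorProduct.map LinearMap.id (Coalgebra.comul (R := k) (A := H))
    ∘ₗ (Coalgebra.comul (R := k) (A := H))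

/-- `(h₂ ⊗ h₃) ⊗ (g₂ ⊗ g₃) ↦ (γ⁻¹(h₂g₂)γ(h₃)) ⊗ γ(g₃)`. -/
def thetaTwo (γ γ' : H →ₗ[k] P) : (H ⊗[k] H) ⊗[k] (H ⊗[k] H) →ₗ[k] P ⊗[k] P :=
  TensorProduct.map (LinearMap.mul' k P) LinearMap.id
    ∘ₗ (TensorProduct.assoc k P P P).symm.toLinearMap
    ∘ₗ TensorProduct.map γ' (TensorProduct.map γ γ)
    ∘ₗ TensorProduct.map (LinearMap.mul' k H) LinearMap.id
    ∘ₗ (TensorProduct.tensorTensorTensorComm k H H H H).toLinearMap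

/-- `(h₁⊗(h₂⊗h₃)) ⊗ (g₁⊗(g₂⊗g₃)) ↦ (h₁g₁) ⊗ ((γ⁻¹(h₂g₂)γ(h₃)) ⊗ γ(g₃))`. -/
def muLeftPart (γ γ' : H →ₗ[k] P) :
    (H ⊗[k] (H ⊗[k] H)) ⊗[k] (H ⊗[k] (H ⊗[k] H)) →ₗ[k] H ⊗[k] (P ⊗[k] P) :=
  TensorProduct.map (LinearMap.mul' k H) (thetaTwo k H P γ γ')
    ∘ₗ (TensorProduct.tensorTensorTensorComm k H (H ⊗[k] H) H (H ⊗[k] H)).toLinearMap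

/-- `(u ⊗ v) ⊗ (n ⊗ m) ↦ u n v m`. -/
def collectTwo : (P ⊗[k] P) ⊗[k] (P ⊗[k] P) →ₗ[k] P :=
  (LinearMap.mul' k P)
    ∘ₗ TensorProduct.map (LinearMap.mul' k P) (LinearMap.mul' k P)
    ∘ₗ (TensorProduct.tensorTensorTensorComm k P P P P).toLinearMap

/-- The product of `H #^γ N` (defined on all of `H ⊗ P`):
`(h ⊗ n)(g ⊗ m) = h₁g₁ ⊗ γ⁻¹(h₂g₂) γ(h₃) n γ(g₃) m`. -/
def muGamma (γ γ' : H →ₗ[k] P) : (H ⊗[k] P) ⊗[k] (H ⊗[k] P) →ₗ[k] H ⊗[k] P :=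
  TensorProduct.map LinearMap.id (collectTwo k P)
    ∘ₗ (TensorProduct.assoc k H (P ⊗[k] P) (P ⊗[k] P)).toLinearMap
    ∘ₗ TensorProduct.map (muLeftPart k H P γ γ') LinearMap.id
    ∘ₗ (TensorProduct.tensorTensorTensorComm k (H ⊗[k] (H ⊗[k] H)) P
          (H ⊗[k] (H ⊗[k] H)) P).toLinearMap
    ∘ₗ TensorProduct.map (TensorProduct.map (comul3R k H) LinearMap.id)
        (TensorProduct.map (comul3R k H) LinearMap.id)

/-- `Φ(p) = p₍₋₂₎ ⊗ γ⁻¹(p₍₋₁₎) p₍₀₎`. -/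
def PhiMap (δ : P →ₗ[k] H ⊗[k] P) (γ' : H →ₗ[k] P) : P →ₗ[k] H ⊗[k] P :=
  TensorProduct.map LinearMap.id ((LinearMap.mul' k P) ∘ₗ TensorProduct.map γ' LinearMap.id)
    ∘ₗ TensorProduct.map LinearMap.id δ ∘ₗ δ

end Defs


section Conv
variable {k : Type*} [Field k] {H : Type*} [Ring H] [Bialgebra k H]
  {A : Type*} [Ring A] [Algebra k A] {B : Type*} [Ring B] [Algebra k B]

/-- Convolution product on `Hom(H, A)`. -/
def conv (f g : H →ₗ[k] A) : H →ₗ[k] A :=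
  LinearMap.mul' k A ∘ₗ TensorProduct.map f g ∘ₗ Coalgebra.comul

lemma conv_apply (f g : H →ₗ[k] A) (x : H) :
    conv f g x = LinearMap.mul' k A (TensorProduct.map f g (Coalgebra.comul x)) := rfl

lemma map_split_left {X Y Z W V : Type*} [AddCommGroup X] [AddCommGroup Y] [AddCommGroup Z]
    [AddCommGroup W] [AddCommGroup V] [Module k X] [Module k Y] [Module k Z] [Module k W]
    [Module k V] (f₁ : X →ₗ[k] Y) (f₂ : Y →ₗ[k] Z) (g : W →ₗ[k] V) :
    TensorProduct.map (f₂ ∘ₗ f₁) g = TensorProduct.map f₂ g ∘ₗ f₁.rTensor W := by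
  simp

lemma map_split_right {X Y Z W V : Type*} [AddCommGroup X] [AddCommGroup Y] [AddCommGroup Z]
    [AddCommGroup W] [AddCommGroup V] [Module k X] [Module k Y] [Module k Z] [Module k W]
    [Module k V] (f : X →ₗ[k] Y) (g₁ : W →ₗ[k] Z) (g₂ : Z →ₗ[k] V) :
    TensorProduct.map f (g₂ ∘ₗ g₁) = TensorProduct.map f g₂ ∘ₗ g₁.lTensor X := by
  simp

lemma map_id_comp {X Y Z W : Type*} [AddCommGroup X] [AddCommGroup Y] [AddCommGroup Z]
    [AddCommGroup W] [Module k X] [Module k Y] [Module k Z] [Module k W]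
    (f : X →ₗ[k] Y) (g : Y →ₗ[k] Z) :
    TensorProduct.map (LinearMap.id : W →ₗ[k] W) (g ∘ₗ f)
      = TensorProduct.map LinearMap.id g ∘ₗ TensorProduct.map LinearMap.id f := by
  apply TensorProduct.ext'; intro x y; simp

lemma conv_assoc (f g h : H →ₗ[k] A) : conv (conv f g) h = conv f (conv g h) := by
  apply LinearMap.ext; intro x
  rw [conv_apply, conv_apply,
    show conv f g = (LinearMap.mul' k A ∘ₗ TensorProduct.map f g) ∘ₗ Coalgebra.comul from rfl,
    show conv g h = (LinearMap.mul' k A ∘ₗ TensorProduct.map g h) ∘ₗ Coalgebra.comul from rfl,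
    map_split_left, map_split_right]
  simp only [LinearMap.comp_apply]
  rw [← Coalgebra.coassoc_symm_apply]
  generalize (LinearMap.lTensor H (Coalgebra.comul (R := k))) (Coalgebra.comul (R := k) x) = t
  induction t using TensorProduct.induction_on with
  | zero => simp only [_root_.map_zero]
  | add u v hu hv => simp only [_root_.map_add, hu, hv]
  | tmul a s =>
    induction s using TensorProduct.induction_on with
    | zero => simp only [tmul_zero, _root_.map_zero]
    | add u v hu hv => simp only [tmul_add, _root_.map_add, hu, hv]
    | tmul b c =>
      simp [conv_apply, assoc_symm_tmul, mul_assoc]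

/-- unit of convolution -/
def convOne : H →ₗ[k] A := Algebra.linearMap k A ∘ₗ Coalgebra.counit

lemma conv_one_right (f : H →ₗ[k] A) : conv f convOne = f := by
  apply LinearMap.ext; intro x
  rw [conv_apply,
    show (convOne : H →ₗ[k] A) = Algebra.linearMap k A ∘ₗ Coalgebra.counit from rfl,
    map_split_right]
  simp only [LinearMap.comp_apply]
  rw [← LinearMap.comp_apply (Coalgebra.counit.lTensor H), Coalgebra.lTensor_counit_comp_comul]
  simp [Algebra.smul_def, Algebra.commutes]

lemma conv_one_left (f : H →ₗ[k] A) : conv convOne f = f := by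
  apply LinearMap.ext; intro x
  rw [conv_apply,
    show (convOne : H →ₗ[k] A) = Algebra.linearMap k A ∘ₗ Coalgebra.counit from rfl,
    map_split_left]
  simp only [LinearMap.comp_apply]
  rw [← LinearMap.comp_apply (Coalgebra.counit.rTensor H), Coalgebra.rTensor_counit_comp_comul]
  simp [Algebra.smul_def]

lemma comp_conv (φ : A →ₗ[k] B) (hφ : ∀ a b : A, φ (a * b) = φ a * φ b)
    (f g : H →ₗ[k] A) : φ ∘ₗ conv f g = conv (φ ∘ₗ f) (φ ∘ₗ g) := by
  apply LinearMap.ext; intro x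
  simp only [LinearMap.comp_apply, conv_apply]
  generalize Coalgebra.comul (R := k) x = t
  induction t using TensorProduct.induction_on with
  | zero => simp only [_root_.map_zero]
  | add u v hu hv => simp only [_root_.map_add, hu, hv]
  | tmul a b => simp [hφ]

lemma comp_convOne (φ : A →ₗ[k] B) (hφ1 : φ 1 = 1) :
    φ ∘ₗ (convOne : H →ₗ[k] A) = convOne := by
  apply LinearMap.ext; intro x
  simp [convOne, Algebra.algebraMap_eq_smul_one, hφ1, map_smul]

end Conv

section Main
variable {k : Type*} [Field k] {H : Type*} [Ring H] [HopfAlgebra k H]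
  {P : Type*} [Ring P] [Algebra k P]

/-- `h ⊗ x ↦ γ'(h) x`. -/
def wmap (γ' : H →ₗ[k] P) : H ⊗[k] P →ₗ[k] P :=
  LinearMap.mul' k P ∘ₗ TensorProduct.map γ' LinearMap.id

/-- `h ⊗ x ↦ γ(h) x`. -/
def psimap (γ : H →ₗ[k] P) : H ⊗[k] P →ₗ[k] P :=
  LinearMap.mul' k P ∘ₗ TensorProduct.map γ LinearMap.id

lemma wmap_tmul (γ' : H →ₗ[k] P) (h : H) (x : P) : wmap γ' (h ⊗ₜ[k] x) = γ' h * x := rfl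

lemma psimap_tmul (γ : H →ₗ[k] P) (h : H) (x : P) : psimap γ (h ⊗ₜ[k] x) = γ h * x := rfl

/-- Iterated coaction. -/
def d2 (δ : P →ₗ[k] H ⊗[k] P) : P →ₗ[k] H ⊗[k] (H ⊗[k] P) :=
  TensorProduct.map LinearMap.id δ ∘ₗ δ

lemma PhiMap_eq (δ : P →ₗ[k] H ⊗[k] P) (γ' : H →ₗ[k] P) :
    PhiMap k H P δ γ' = TensorProduct.map LinearMap.id (wmap γ') ∘ₗ d2 δ := rfl

lemma PhiMap_apply (δ : P →ₗ[k] H ⊗[k] P) (γ' : H →ₗ[k] P) (p : P) :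
    PhiMap k H P δ γ' p
      = TensorProduct.map LinearMap.id (wmap γ') (TensorProduct.map LinearMap.id δ (δ p)) := rfl

section WithMaps

variable (δ : P →ₗ[k] H ⊗[k] P) (γ γ' : H →ₗ[k] P)

/-- `θ(p) = γ'(p₋₁) p₀`. -/
def thetaMap : P →ₗ[k] P := wmap γ' ∘ₗ δ

lemma PhiMap_eq' : PhiMap k H P δ γ' = TensorProduct.map LinearMap.id (thetaMap δ γ') ∘ₗ δ := by
  rw [PhiMap_eq, d2, ← LinearMap.comp_assoc, ← map_id_comp]; rfl

lemma mem_coinvSub {x : P} : x ∈ coinvSub k H P δ ↔ δ x = (1 : H) ⊗ₜ[k] x := by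
  constructor
  · intro hx
    have := (LinearMap.mem_ker).1 hx
    have h2 : δ x - TensorProduct.mk k H P 1 x = 0 := by exact this
    rw [sub_eq_zero] at h2; exact h2
  · intro hx
    refine LinearMap.mem_ker.2 ?_
    show δ x - TensorProduct.mk k H P 1 x = 0
    rw [sub_eq_zero]; exact hx

lemma hcoassoc_apply
    (hcoassoc : (TensorProduct.map (Coalgebra.comul (R := k) (A := H)) LinearMap.id) ∘ₗ δ
      = (TensorProduct.assoc k H H P).symm.toLinearMap
          ∘ₗ (TensorProduct.map LinearMap.id δ) ∘ₗ δ) (p : P) :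
    TensorProduct.map LinearMap.id δ (δ p)
      = TensorProduct.assoc k H H P
          (TensorProduct.map (Coalgebra.comul (R := k) (A := H)) LinearMap.id (δ p)) := by
  have := LinearMap.congr_fun hcoassoc p
  simp only [LinearMap.comp_apply, LinearEquiv.coe_coe] at this
  rw [this, LinearEquiv.apply_symm_apply]

lemma gamma'_one
    (hγone : γ 1 = 1)
    (hconv₂ : (LinearMap.mul' k P) ∘ₗ TensorProduct.map γ' γ
          ∘ₗ (Coalgebra.comul (R := k) (A := H))
        = (Algebra.linearMap k P) ∘ₗ (Coalgebra.counit (R := k) (A := H))) :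
    γ' 1 = 1 := by
  have := LinearMap.congr_fun hconv₂ (1 : H)
  simp only [LinearMap.comp_apply] at this
  rw [Bialgebra.comul_one, Algebra.TensorProduct.one_def] at this
  simp [hγone, Bialgebra.counit_one] at this
  simpa using this

lemma phi_one (hone : δ 1 = 1) (hγone : γ 1 = 1)
    (hconv₂ : (LinearMap.mul' k P) ∘ₗ TensorProduct.map γ' γ
          ∘ₗ (Coalgebra.comul (R := k) (A := H))
        = (Algebra.linearMap k P) ∘ₗ (Coalgebra.counit (R := k) (A := H))) :
    PhiMap k H P δ γ' 1 = (1 : H) ⊗ₜ[k] (1 : P) := by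
  rw [PhiMap_apply]
  rw [hone, Algebra.TensorProduct.one_def]
  simp [wmap_tmul, hone, Algebra.TensorProduct.one_def,
    gamma'_one γ γ' hγone hconv₂]

end WithMaps
end Main

section Main2
variable {k : Type*} [Field k] {H : Type*} [Ring H] [HopfAlgebra k H]
  {P : Type*} [Ring P] [Algebra k P]
  (δ : P →ₗ[k] H ⊗[k] P) (γ γ' : H →ₗ[k] P)

lemma psi_phi
    (hcoassoc : (TensorProduct.map (Coalgebra.comul (R := k) (A := H)) LinearMap.id) ∘ₗ δ
      = (TensorProduct.assoc k H H P).symm.toLinearMap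
          ∘ₗ (TensorProduct.map LinearMap.id δ) ∘ₗ δ)
    (hcounit : ∀ p : P,
      (TensorProduct.lid k P)
        ((TensorProduct.map (Coalgebra.counit (R := k) (A := H)) LinearMap.id) (δ p)) = p)
    (hconv₁ : (LinearMap.mul' k P) ∘ₗ TensorProduct.map γ γ'
          ∘ₗ (Coalgebra.comul (R := k) (A := H))
        = (Algebra.linearMap k P) ∘ₗ (Coalgebra.counit (R := k) (A := H)))
    (p : P) : psimap γ (PhiMap k H P δ γ' p) = p := by
  rw [PhiMap_apply, hcoassoc_apply δ hcoassoc]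
  have key2 : ∀ (s : H ⊗[k] H) (x : P),
      psimap γ (TensorProduct.map LinearMap.id (wmap γ')
        (TensorProduct.assoc k H H P (s ⊗ₜ[k] x)))
      = LinearMap.mul' k P (TensorProduct.map γ γ' s) * x := by
    intro s x
    induction s using TensorProduct.induction_on with
    | zero => simp
    | add u v hu hv => simp only [add_tmul, _root_.map_add, hu, hv, add_mul]
    | tmul a b => simp [psimap_tmul, wmap_tmul, mul_assoc]
  have key : ∀ (t : H ⊗[k] P),
      psimap γ (TensorProduct.map LinearMap.id (wmap γ')
        (TensorProduct.assoc k H H P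
          (TensorProduct.map (Coalgebra.comul (R := k) (A := H)) LinearMap.id t)))
      = TensorProduct.lid k P
          (TensorProduct.map (Coalgebra.counit (R := k) (A := H)) LinearMap.id t) := by
    intro t
    induction t using TensorProduct.induction_on with
    | zero => simp
    | add u v hu hv => simp only [_root_.map_add, hu, hv]
    | tmul h x =>
      simp only [map_tmul, LinearMap.id_coe, id_eq]
      rw [key2 (Coalgebra.comul h) x]
      have := LinearMap.congr_fun hconv₁ h
      simp only [LinearMap.comp_apply] at this
      rw [this]
      simp [Algebra.smul_def, lid_tmul]
  rw [key (δ p), hcounit p]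

lemma phi_injective
    (hcoassoc : (TensorProduct.map (Coalgebra.comul (R := k) (A := H)) LinearMap.id) ∘ₗ δ
      = (TensorProduct.assoc k H H P).symm.toLinearMap
          ∘ₗ (TensorProduct.map LinearMap.id δ) ∘ₗ δ)
    (hcounit : ∀ p : P,
      (TensorProduct.lid k P)
        ((TensorProduct.map (Coalgebra.counit (R := k) (A := H)) LinearMap.id) (δ p)) = p)
    (hconv₁ : (LinearMap.mul' k P) ∘ₗ TensorProduct.map γ γ'
          ∘ₗ (Coalgebra.comul (R := k) (A := H))
        = (Algebra.linearMap k P) ∘ₗ (Coalgebra.counit (R := k) (A := H))) :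
    Function.Injective (PhiMap k H P δ γ') :=
  Function.LeftInverse.injective (g := psimap γ) (psi_phi δ γ γ' hcoassoc hcounit hconv₁)

lemma phi_colinear
    (hcoassoc : (TensorProduct.map (Coalgebra.comul (R := k) (A := H)) LinearMap.id) ∘ₗ δ
      = (TensorProduct.assoc k H H P).symm.toLinearMap
          ∘ₗ (TensorProduct.map LinearMap.id δ) ∘ₗ δ) :
    (TensorProduct.assoc k H H P).toLinearMap
        ∘ₗ TensorProduct.map (Coalgebra.comul (R := k) (A := H)) LinearMap.id
        ∘ₗ PhiMap k H P δ γ'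
      = TensorProduct.map LinearMap.id (PhiMap k H P δ γ') ∘ₗ δ := by
  apply LinearMap.ext; intro p
  simp only [LinearMap.comp_apply, LinearEquiv.coe_coe]
  rw [PhiMap_eq' δ γ']
  simp only [LinearMap.comp_apply]
  -- step 1: commute `map comul id` past `map id θ`
  have step1 : ∀ t : H ⊗[k] P,
      TensorProduct.map (Coalgebra.comul (R := k) (A := H)) LinearMap.id
          (TensorProduct.map LinearMap.id (thetaMap δ γ') t)
        = TensorProduct.map LinearMap.id (thetaMap δ γ')
            (TensorProduct.map (Coalgebra.comul (R := k) (A := H)) LinearMap.id t) := by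
    intro t
    induction t using TensorProduct.induction_on with
    | zero => simp
    | add u v hu hv => simp only [_root_.map_add, hu, hv]
    | tmul h x => simp
  rw [step1]
  -- step 2: hcoassoc
  have h2 := LinearMap.congr_fun hcoassoc p
  simp only [LinearMap.comp_apply, LinearEquiv.coe_coe] at h2
  rw [h2]
  -- step 3: naturality of assoc
  have step3 : ∀ v : H ⊗[k] (H ⊗[k] P),
      TensorProduct.assoc k H H P
          (TensorProduct.map LinearMap.id (thetaMap δ γ')
            ((TensorProduct.assoc k H H P).symm v))
        = TensorProduct.map LinearMap.id
            (TensorProduct.map LinearMap.id (thetaMap δ γ')) v := by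
    intro v
    induction v using TensorProduct.induction_on with
    | zero => simp
    | add u v hu hv => simp only [_root_.map_add, hu, hv]
    | tmul a s =>
      induction s using TensorProduct.induction_on with
      | zero => simp
      | add u v hu hv => simp only [tmul_add, _root_.map_add, hu, hv]
      | tmul b x => simp
  rw [step3]
  -- step 4: repackage
  have step4 : ∀ t : H ⊗[k] P,
      TensorProduct.map LinearMap.id (TensorProduct.map LinearMap.id (thetaMap δ γ'))
          (TensorProduct.map LinearMap.id δ t)
        = TensorProduct.map LinearMap.id
            (TensorProduct.map LinearMap.id (thetaMap δ γ') ∘ₗ δ) t := by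
    intro t
    induction t using TensorProduct.induction_on with
    | zero => simp
    | add u v hu hv => simp only [_root_.map_add, hu, hv]
    | tmul h x => simp
  rw [step4]

end Main2

section Main3
variable {k : Type*} [Field k] {H : Type*} [Ring H] [HopfAlgebra k H]
  {P : Type*} [Ring P] [Algebra k P]

/-- `h ↦ h ⊗ 1`. -/
def alphaMap : H →ₗ[k] H ⊗[k] P :=
  (Algebra.TensorProduct.includeLeft (R := k) (S := k) (A := H) (B := P)).toLinearMap

/-- `x ↦ 1 ⊗ x`. -/
def betaMap : P →ₗ[k] H ⊗[k] P :=
  (Algebra.TensorProduct.includeRight (R := k) (A := H) (B := P)).toLinearMap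

lemma alphaMap_apply (h : H) : (alphaMap : H →ₗ[k] H ⊗[k] P) h = h ⊗ₜ[k] 1 := rfl
lemma betaMap_apply (x : P) : (betaMap : P →ₗ[k] H ⊗[k] P) x = (1 : H) ⊗ₜ[k] x := rfl

variable (δ : P →ₗ[k] H ⊗[k] P) (γ γ' : H →ₗ[k] P)

lemma conv_alpha_beta (f : H →ₗ[k] P) :
    conv alphaMap (betaMap ∘ₗ f) = TensorProduct.map LinearMap.id f
      ∘ₗ (Coalgebra.comul (R := k) (A := H)) := by
  apply LinearMap.ext; intro x
  simp only [conv_apply, LinearMap.comp_apply]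
  generalize Coalgebra.comul (R := k) x = t
  induction t using TensorProduct.induction_on with
  | zero => simp
  | add u v hu hv => simp only [_root_.map_add, hu, hv]
  | tmul a b =>
    simp [alphaMap_apply, betaMap_apply, Algebra.TensorProduct.tmul_mul_tmul]

lemma conv_beta_alpha (g : H →ₗ[k] H) (f' : H →ₗ[k] P) :
    conv (betaMap ∘ₗ f') (alphaMap ∘ₗ g)
      = (TensorProduct.comm k P H).toLinearMap ∘ₗ TensorProduct.map f' g
          ∘ₗ (Coalgebra.comul (R := k) (A := H)) := by
  apply LinearMap.ext; intro x
  simp only [conv_apply, LinearMap.comp_apply, LinearEquiv.coe_coe]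
  generalize Coalgebra.comul (R := k) x = t
  induction t using TensorProduct.induction_on with
  | zero => simp
  | add u v hu hv => simp only [_root_.map_add, hu, hv]
  | tmul a b =>
    simp [alphaMap_apply, betaMap_apply, Algebra.TensorProduct.tmul_mul_tmul]

lemma conv_id_antipode :
    conv (LinearMap.id : H →ₗ[k] H) (HopfAlgebra.antipode (R := k)) = convOne := by
  have := HopfAlgebra.mul_antipode_lTensor_comul (R := k) (A := H)
  exact this

/-- `δ ∘ γ'` is given by the antipode formula. -/
lemma delta_gamma'
    (hmulc : ∀ p q : P, δ (p * q) = δ p * δ q)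
    (hone : δ 1 = 1)
    (hcolin : δ ∘ₗ γ
      = TensorProduct.map LinearMap.id γ ∘ₗ (Coalgebra.comul (R := k) (A := H)))
    (hconv₁ : (LinearMap.mul' k P) ∘ₗ TensorProduct.map γ γ'
          ∘ₗ (Coalgebra.comul (R := k) (A := H))
        = (Algebra.linearMap k P) ∘ₗ (Coalgebra.counit (R := k) (A := H)))
    (hconv₂ : (LinearMap.mul' k P) ∘ₗ TensorProduct.map γ' γ
          ∘ₗ (Coalgebra.comul (R := k) (A := H))
        = (Algebra.linearMap k P) ∘ₗ (Coalgebra.counit (R := k) (A := H))) :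
    δ ∘ₗ γ' = (TensorProduct.comm k P H).toLinearMap
        ∘ₗ TensorProduct.map γ' (HopfAlgebra.antipode (R := k))
        ∘ₗ (Coalgebra.comul (R := k) (A := H)) := by
  have hβ : ∀ a b : P, (betaMap : P →ₗ[k] H ⊗[k] P) (a * b) = betaMap a * betaMap b := by
    intro a b; simp [betaMap_apply, Algebra.TensorProduct.tmul_mul_tmul]
  have hα : ∀ a b : H, (alphaMap : H →ₗ[k] H ⊗[k] P) (a * b) = alphaMap a * alphaMap b := by
    intro a b; simp [alphaMap_apply, Algebra.TensorProduct.tmul_mul_tmul]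
  have hδm : ∀ a b : P, δ (a * b) = δ a * δ b := hmulc
  have hδ1 : δ 1 = 1 := hone
  -- `F = δ ∘ γ` as a convolution
  have hF : δ ∘ₗ γ = conv alphaMap (betaMap ∘ₗ γ) := by
    rw [conv_alpha_beta, hcolin]
  -- definition of G'
  set G' := (TensorProduct.comm k P H).toLinearMap
      ∘ₗ TensorProduct.map γ' (HopfAlgebra.antipode (R := k))
      ∘ₗ (Coalgebra.comul (R := k) (A := H)) with hG'def
  have hG' : G' = conv (betaMap ∘ₗ γ') (alphaMap ∘ₗ HopfAlgebra.antipode (R := k)) := by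
    rw [conv_beta_alpha]
  -- conv γ γ' = convOne  and conv γ' γ = convOne
  have hc₁ : conv γ γ' = (convOne : H →ₗ[k] P) := hconv₁
  have hc₂ : conv γ' γ = (convOne : H →ₗ[k] P) := hconv₂
  -- conv (δγ') (δγ) = convOne
  have hGF : conv (δ ∘ₗ γ') (δ ∘ₗ γ) = (convOne : H →ₗ[k] H ⊗[k] P) := by
    rw [← comp_conv δ hδm, hc₂, comp_convOne δ hδ1]
  -- conv F G' = convOne
  have hFG' : conv (δ ∘ₗ γ) G' = (convOne : H →ₗ[k] H ⊗[k] P) := by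
    rw [hF, hG', conv_assoc, ← conv_assoc (betaMap ∘ₗ γ),
      ← comp_conv (betaMap : P →ₗ[k] H ⊗[k] P) hβ, hc₁,
      comp_convOne (betaMap : P →ₗ[k] H ⊗[k] P) (by simp [betaMap_apply,
        Algebra.TensorProduct.one_def]),
      conv_one_left]
    have h5 := comp_conv (alphaMap : H →ₗ[k] H ⊗[k] P) hα LinearMap.id
      (HopfAlgebra.antipode (R := k))
    rw [LinearMap.comp_id] at h5
    rw [← h5, conv_id_antipode,
      comp_convOne _ (by simp [alphaMap_apply, Algebra.TensorProduct.one_def])]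
  calc δ ∘ₗ γ' = conv (δ ∘ₗ γ') convOne := (conv_one_right _).symm
    _ = conv (δ ∘ₗ γ') (conv (δ ∘ₗ γ) G') := by rw [hFG']
    _ = conv (conv (δ ∘ₗ γ') (δ ∘ₗ γ)) G' := (conv_assoc _ _ _).symm
    _ = conv convOne G' := by rw [hGF]
    _ = G' := conv_one_left _

end Main3

section Main4
variable {k : Type*} [Field k] {H : Type*} [Ring H] [HopfAlgebra k H]
  {P : Type*} [Ring P] [Algebra k P]
  (δ : P →ₗ[k] H ⊗[k] P) (γ γ' : H →ₗ[k] P)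

lemma theta_coinv
    (hcoassoc : (TensorProduct.map (Coalgebra.comul (R := k) (A := H)) LinearMap.id) ∘ₗ δ
      = (TensorProduct.assoc k H H P).symm.toLinearMap
          ∘ₗ (TensorProduct.map LinearMap.id δ) ∘ₗ δ)
    (hcounit : ∀ p : P,
      (TensorProduct.lid k P)
        ((TensorProduct.map (Coalgebra.counit (R := k) (A := H)) LinearMap.id) (δ p)) = p)
    (hmulc : ∀ p q : P, δ (p * q) = δ p * δ q)
    (hone : δ 1 = 1)
    (hcolin : δ ∘ₗ γ
      = TensorProduct.map LinearMap.id γ ∘ₗ (Coalgebra.comul (R := k) (A := H)))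
    (hconv₁ : (LinearMap.mul' k P) ∘ₗ TensorProduct.map γ γ'
          ∘ₗ (Coalgebra.comul (R := k) (A := H))
        = (Algebra.linearMap k P) ∘ₗ (Coalgebra.counit (R := k) (A := H)))
    (hconv₂ : (LinearMap.mul' k P) ∘ₗ TensorProduct.map γ' γ
          ∘ₗ (Coalgebra.comul (R := k) (A := H))
        = (Algebra.linearMap k P) ∘ₗ (Coalgebra.counit (R := k) (A := H)))
    (p : P) : thetaMap δ γ' p ∈ coinvSub k H P δ := by
  set S := HopfAlgebra.antipode (R := k) (A := H) with hS
  set G' := (TensorProduct.comm k P H).toLinearMap ∘ₗ TensorProduct.map γ' S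
      ∘ₗ (Coalgebra.comul (R := k) (A := H)) with hG'
  have hδγ' : δ ∘ₗ γ' = G' := delta_gamma' δ γ γ' hmulc hone hcolin hconv₁ hconv₂
  rw [mem_coinvSub]
  show δ (wmap γ' (δ p)) = (1 : H) ⊗ₜ[k] thetaMap δ γ' p
  -- step 1
  have step1 : ∀ t : H ⊗[k] P, δ (wmap γ' t)
      = LinearMap.mul' k (H ⊗[k] P) (TensorProduct.map (δ ∘ₗ γ') δ t) := by
    intro t
    induction t using TensorProduct.induction_on with
    | zero => simp [wmap]
    | add u v hu hv => simp only [_root_.map_add, hu, hv]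
    | tmul h x => simp [wmap_tmul, hmulc]
  rw [step1, hδγ']
  -- step 2: split off the comultiplication inside G'
  have step2 : ∀ t : H ⊗[k] P,
      LinearMap.mul' k (H ⊗[k] P) (TensorProduct.map G' δ t)
        = LinearMap.mul' k (H ⊗[k] P)
            (TensorProduct.map ((TensorProduct.comm k P H).toLinearMap
                ∘ₗ TensorProduct.map γ' S) LinearMap.id
              (TensorProduct.map (Coalgebra.comul (R := k) (A := H)) δ t)) := by
    intro t
    induction t using TensorProduct.induction_on with
    | zero => simp
    | add u v hu hv => simp only [_root_.map_add, hu, hv]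
    | tmul h x => simp [hG']
  rw [step2]
  -- step 3: map Δ δ t = map id δ (map Δ id t)
  have step3 : ∀ t : H ⊗[k] P,
      TensorProduct.map (Coalgebra.comul (R := k) (A := H)) δ t
        = TensorProduct.map LinearMap.id δ
            (TensorProduct.map (Coalgebra.comul (R := k) (A := H)) LinearMap.id t) := by
    intro t
    induction t using TensorProduct.induction_on with
    | zero => simp
    | add u v hu hv => simp only [_root_.map_add, hu, hv]
    | tmul h x => simp
  rw [step3]
  have h3 := LinearMap.congr_fun hcoassoc p
  simp only [LinearMap.comp_apply, LinearEquiv.coe_coe] at h3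
  rw [h3]
  -- step 4: naturality of assoc.symm
  have step4 : ∀ v : H ⊗[k] (H ⊗[k] P),
      TensorProduct.map LinearMap.id δ ((TensorProduct.assoc k H H P).symm v)
        = (TensorProduct.assoc k H H (H ⊗[k] P)).symm
            (TensorProduct.map LinearMap.id (TensorProduct.map LinearMap.id δ) v) := by
    intro v
    induction v using TensorProduct.induction_on with
    | zero => simp
    | add u v hu hv => simp only [_root_.map_add, hu, hv]
    | tmul a s =>
      induction s using TensorProduct.induction_on with
      | zero => simp
      | add u v hu hv => simp only [tmul_add, _root_.map_add, hu, hv]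
      | tmul b x => simp
  rw [step4]
  -- step 5: inner d2 expansion
  set J := (TensorProduct.assoc k H H P).toLinearMap
      ∘ₗ TensorProduct.map (Coalgebra.comul (R := k) (A := H)) LinearMap.id
      with hJ
  have step5 : TensorProduct.map LinearMap.id (TensorProduct.map LinearMap.id δ)
      (TensorProduct.map LinearMap.id δ (δ p))
      = TensorProduct.map LinearMap.id J (TensorProduct.map LinearMap.id δ (δ p)) := by
    have inner : ∀ t : H ⊗[k] P,
        TensorProduct.map LinearMap.id (TensorProduct.map LinearMap.id δ)
            (TensorProduct.map LinearMap.id δ t)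
          = TensorProduct.map LinearMap.id (J ∘ₗ δ) t := by
      intro t
      induction t using TensorProduct.induction_on with
      | zero => simp
      | add u v hu hv => simp only [_root_.map_add, hu, hv]
      | tmul h x =>
        simp only [map_tmul, LinearMap.id_coe, id_eq, LinearMap.comp_apply]
        congr 1
        rw [hJ]
        simp only [LinearMap.comp_apply, LinearEquiv.coe_coe]
        rw [hcoassoc_apply δ hcoassoc x]
    rw [inner (δ p)]
    have inner2 : ∀ t : H ⊗[k] P,
        TensorProduct.map LinearMap.id (J ∘ₗ δ) t
          = TensorProduct.map LinearMap.id J (TensorProduct.map LinearMap.id δ t) := by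
      intro t
      induction t using TensorProduct.induction_on with
      | zero => simp
      | add u v hu hv => simp only [_root_.map_add, hu, hv]
      | tmul h x => simp
    rw [inner2 (δ p)]
  rw [step5]
  -- step 6/7/8 : the antipode collapse
  have key3 : ∀ (a : H) (s : H ⊗[k] H) (x : P),
      LinearMap.mul' k (H ⊗[k] P)
          (TensorProduct.map ((TensorProduct.comm k P H).toLinearMap
              ∘ₗ TensorProduct.map γ' S) LinearMap.id
            ((TensorProduct.assoc k H H (H ⊗[k] P)).symm
              (a ⊗ₜ[k] (TensorProduct.assoc k H H P (s ⊗ₜ[k] x)))))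
        = (LinearMap.mul' k H (TensorProduct.map S LinearMap.id s)) ⊗ₜ[k] (γ' a * x) := by
    intro a s x
    induction s using TensorProduct.induction_on with
    | zero => simp
    | add u v hu hv =>
      simp only [add_tmul, _root_.map_add, tmul_add, hu, hv]
    | tmul b c =>
      simp [Algebra.TensorProduct.tmul_mul_tmul]
  have key4 : ∀ (a : H) (u : H ⊗[k] P),
      LinearMap.mul' k (H ⊗[k] P)
          (TensorProduct.map ((TensorProduct.comm k P H).toLinearMap
              ∘ₗ TensorProduct.map γ' S) LinearMap.id
            ((TensorProduct.assoc k H H (H ⊗[k] P)).symm (a ⊗ₜ[k] J u)))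
        = (1 : H) ⊗ₜ[k] (γ' a * (TensorProduct.lid k P
            (TensorProduct.map (Coalgebra.counit (R := k) (A := H)) LinearMap.id u))) := by
    intro a u
    induction u using TensorProduct.induction_on with
    | zero => simp
    | add u v hu hv => simp only [_root_.map_add, tmul_add, mul_add, hu, hv]
    | tmul c x =>
      have : J (c ⊗ₜ[k] x) = TensorProduct.assoc k H H P
          ((Coalgebra.comul (R := k) c) ⊗ₜ[k] x) := by simp [hJ]
      rw [this, key3]
      have hanti : LinearMap.mul' k H (TensorProduct.map S LinearMap.id
          (Coalgebra.comul (R := k) c))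
          = Coalgebra.counit (R := k) c • (1 : H) := by
        have := HopfAlgebra.mul_antipode_rTensor_comul_apply (R := k) (a := c)
        rw [← hS] at this
        rw [show TensorProduct.map S LinearMap.id (Coalgebra.comul (R := k) c)
          = S.rTensor H (Coalgebra.comul (R := k) c) from rfl, this,
          Algebra.algebraMap_eq_smul_one]
      rw [hanti]
      rw [smul_tmul]
      simp [mul_smul_comm]
  have key5 : ∀ v : H ⊗[k] (H ⊗[k] P),
      LinearMap.mul' k (H ⊗[k] P)
          (TensorProduct.map ((TensorProduct.comm k P H).toLinearMap
              ∘ₗ TensorProduct.map γ' S) LinearMap.id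
            ((TensorProduct.assoc k H H (H ⊗[k] P)).symm
              (TensorProduct.map LinearMap.id J v)))
        = (1 : H) ⊗ₜ[k] (wmap γ'
            (TensorProduct.map LinearMap.id ((TensorProduct.lid k P).toLinearMap
              ∘ₗ TensorProduct.map (Coalgebra.counit (R := k) (A := H)) LinearMap.id) v)) := by
    intro v
    induction v using TensorProduct.induction_on with
    | zero => simp [wmap]
    | add u v hu hv => simp only [_root_.map_add, tmul_add, hu, hv]
    | tmul a u =>
      simp only [map_tmul, LinearMap.id_coe, id_eq]
      rw [key4 a u, wmap_tmul]
      rfl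
  rw [key5]
  -- step 9: the counit axiom
  have step9 : TensorProduct.map LinearMap.id ((TensorProduct.lid k P).toLinearMap
        ∘ₗ TensorProduct.map (Coalgebra.counit (R := k) (A := H)) LinearMap.id)
      (TensorProduct.map LinearMap.id δ (δ p)) = δ p := by
    have : ∀ t : H ⊗[k] P,
        TensorProduct.map LinearMap.id ((TensorProduct.lid k P).toLinearMap
            ∘ₗ TensorProduct.map (Coalgebra.counit (R := k) (A := H)) LinearMap.id)
          (TensorProduct.map LinearMap.id δ t) = t := by
      intro t
      induction t using TensorProduct.induction_on with
      | zero => simp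
      | add u v hu hv => simp only [_root_.map_add, hu, hv]
      | tmul h x =>
        simp only [map_tmul, LinearMap.id_coe, id_eq, LinearMap.comp_apply,
          LinearEquiv.coe_coe]
        rw [hcounit x]
    exact this (δ p)
  rw [step9]
  rfl

end Main4

section Main5
variable {k : Type*} [Field k] {H : Type*} [Ring H] [HopfAlgebra k H]
  {P : Type*} [Ring P] [Algebra k P]
  (δ : P →ₗ[k] H ⊗[k] P) (γ γ' : H →ₗ[k] P)

lemma phi_gamma
    (hmulc : ∀ p q : P, δ (p * q) = δ p * δ q)
    (hcolin : δ ∘ₗ γ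
      = TensorProduct.map LinearMap.id γ ∘ₗ (Coalgebra.comul (R := k) (A := H)))
    (hconv₂ : (LinearMap.mul' k P) ∘ₗ TensorProduct.map γ' γ
          ∘ₗ (Coalgebra.comul (R := k) (A := H))
        = (Algebra.linearMap k P) ∘ₗ (Coalgebra.counit (R := k) (A := H)))
    (h : H) (n : P) (hn : n ∈ coinvSub k H P δ) :
    PhiMap k H P δ γ' (γ h * n) = h ⊗ₜ[k] n := by
  rw [mem_coinvSub] at hn
  set ρ := LinearMap.mulRight k n with hρ
  have δstar : ∀ b : H, δ (γ b * n)
      = TensorProduct.map LinearMap.id (ρ ∘ₗ γ) (Coalgebra.comul (R := k) b) := by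
    intro b
    rw [hmulc, hn]
    have hb := LinearMap.congr_fun hcolin b
    simp only [LinearMap.comp_apply] at hb
    rw [hb]
    generalize Coalgebra.comul (R := k) b = s
    induction s using TensorProduct.induction_on with
    | zero => simp
    | add u v hu hv => simp only [_root_.map_add, add_mul, hu, hv]
    | tmul a b' => simp [Algebra.TensorProduct.tmul_mul_tmul, hρ]
  rw [PhiMap_apply, δstar h]
  have claim2 : ∀ s : H ⊗[k] H,
      TensorProduct.map LinearMap.id (wmap γ')
          (TensorProduct.map LinearMap.id δ
            (TensorProduct.map LinearMap.id (ρ ∘ₗ γ) s))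
        = TensorProduct.map LinearMap.id (thetaMap δ γ' ∘ₗ ρ ∘ₗ γ) s := by
    intro s
    induction s using TensorProduct.induction_on with
    | zero => simp
    | add u v hu hv => simp only [_root_.map_add, hu, hv]
    | tmul a b => simp [thetaMap]
  rw [claim2]
  have hcollapse : thetaMap δ γ' ∘ₗ ρ ∘ₗ γ
      = LinearMap.toSpanSingleton k P n ∘ₗ (Coalgebra.counit (R := k) (A := H)) := by
    apply LinearMap.ext; intro b
    simp only [LinearMap.comp_apply, thetaMap, hρ, LinearMap.mulRight_apply]
    show wmap γ' (δ (γ b * n)) = _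
    rw [δstar b]
    have claim3 : ∀ s : H ⊗[k] H,
        wmap γ' (TensorProduct.map LinearMap.id (ρ ∘ₗ γ) s)
          = LinearMap.mul' k P (TensorProduct.map γ' γ s) * n := by
      intro s
      induction s using TensorProduct.induction_on with
      | zero => simp [wmap]
      | add u v hu hv => simp only [_root_.map_add, add_mul, hu, hv]
      | tmul a b' => simp [wmap_tmul, hρ, mul_assoc]
    rw [claim3]
    have hb := LinearMap.congr_fun hconv₂ b
    simp only [LinearMap.comp_apply] at hb
    rw [hb]
    simp [Algebra.algebraMap_eq_smul_one, LinearMap.toSpanSingleton_apply, smul_mul_assoc]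
  rw [hcollapse]
  have claim4 : TensorProduct.map LinearMap.id
        (LinearMap.toSpanSingleton k P n ∘ₗ (Coalgebra.counit (R := k) (A := H)))
        (Coalgebra.comul (R := k) h)
      = TensorProduct.map LinearMap.id (LinearMap.toSpanSingleton k P n)
          (TensorProduct.map LinearMap.id (Coalgebra.counit (R := k) (A := H))
            (Coalgebra.comul (R := k) h)) := by
    generalize Coalgebra.comul (R := k) h = s
    induction s using TensorProduct.induction_on with
    | zero => simp
    | add u v hu hv => simp only [_root_.map_add, hu, hv]
    | tmul a b => simp
  rw [claim4]
  have hcu : TensorProduct.map LinearMap.id (Coalgebra.counit (R := k) (A := H))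
      (Coalgebra.comul (R := k) h) = h ⊗ₜ[k] (1 : k) := by
    have := LinearMap.congr_fun (Coalgebra.lTensor_counit_comp_comul (R := k) (A := H)) h
    simp only [LinearMap.comp_apply] at this
    rw [show TensorProduct.map LinearMap.id (Coalgebra.counit (R := k) (A := H))
      = (Coalgebra.counit (R := k) (A := H)).lTensor H from rfl, this]
    rfl
  rw [hcu]
  simp [LinearMap.toSpanSingleton_apply]

lemma phi_mem
    (hcoassoc : (TensorProduct.map (Coalgebra.comul (R := k) (A := H)) LinearMap.id) ∘ₗ δ
      = (TensorProduct.assoc k H H P).symm.toLinearMap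
          ∘ₗ (TensorProduct.map LinearMap.id δ) ∘ₗ δ)
    (hcounit : ∀ p : P,
      (TensorProduct.lid k P)
        ((TensorProduct.map (Coalgebra.counit (R := k) (A := H)) LinearMap.id) (δ p)) = p)
    (hmulc : ∀ p q : P, δ (p * q) = δ p * δ q)
    (hone : δ 1 = 1)
    (hcolin : δ ∘ₗ γ
      = TensorProduct.map LinearMap.id γ ∘ₗ (Coalgebra.comul (R := k) (A := H)))
    (hconv₁ : (LinearMap.mul' k P) ∘ₗ TensorProduct.map γ γ'
          ∘ₗ (Coalgebra.comul (R := k) (A := H))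
        = (Algebra.linearMap k P) ∘ₗ (Coalgebra.counit (R := k) (A := H)))
    (hconv₂ : (LinearMap.mul' k P) ∘ₗ TensorProduct.map γ' γ
          ∘ₗ (Coalgebra.comul (R := k) (A := H))
        = (Algebra.linearMap k P) ∘ₗ (Coalgebra.counit (R := k) (A := H)))
    (p : P) :
    PhiMap k H P δ γ' p ∈
      LinearMap.range
        (TensorProduct.map (LinearMap.id : H →ₗ[k] H) (coinvSub k H P δ).subtype) := by
  have hphi := LinearMap.congr_fun (PhiMap_eq' δ γ') p
  simp only [LinearMap.comp_apply] at hphi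
  rw [hphi]
  generalize δ p = t
  induction t using TensorProduct.induction_on with
  | zero => simp only [_root_.map_zero]; exact Submodule.zero_mem _
  | add u v hu hv => simp only [_root_.map_add]; exact Submodule.add_mem _ hu hv
  | tmul h x =>
    refine LinearMap.mem_range.2
      ⟨h ⊗ₜ[k] ⟨thetaMap δ γ' x,
        theta_coinv δ γ γ' hcoassoc hcounit hmulc hone hcolin hconv₁ hconv₂ x⟩, ?_⟩
    simp

lemma range_eq
    (hcoassoc : (TensorProduct.map (Coalgebra.comul (R := k) (A := H)) LinearMap.id) ∘ₗ δ
      = (TensorProduct.assoc k H H P).symm.toLinearMap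
          ∘ₗ (TensorProduct.map LinearMap.id δ) ∘ₗ δ)
    (hcounit : ∀ p : P,
      (TensorProduct.lid k P)
        ((TensorProduct.map (Coalgebra.counit (R := k) (A := H)) LinearMap.id) (δ p)) = p)
    (hmulc : ∀ p q : P, δ (p * q) = δ p * δ q)
    (hone : δ 1 = 1)
    (hcolin : δ ∘ₗ γ
      = TensorProduct.map LinearMap.id γ ∘ₗ (Coalgebra.comul (R := k) (A := H)))
    (hconv₁ : (LinearMap.mul' k P) ∘ₗ TensorProduct.map γ γ'
          ∘ₗ (Coalgebra.comul (R := k) (A := H))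
        = (Algebra.linearMap k P) ∘ₗ (Coalgebra.counit (R := k) (A := H)))
    (hconv₂ : (LinearMap.mul' k P) ∘ₗ TensorProduct.map γ' γ
          ∘ₗ (Coalgebra.comul (R := k) (A := H))
        = (Algebra.linearMap k P) ∘ₗ (Coalgebra.counit (R := k) (A := H))) :
    LinearMap.range (PhiMap k H P δ γ')
      = LinearMap.range
          (TensorProduct.map (LinearMap.id : H →ₗ[k] H) (coinvSub k H P δ).subtype) := by
  apply le_antisymm
  · rintro y hy
    obtain ⟨p, rfl⟩ := LinearMap.mem_range.1 hy
    exact phi_mem δ γ γ' hcoassoc hcounit hmulc hone hcolin hconv₁ hconv₂ p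
  · have key : ∀ t : H ⊗[k] (coinvSub k H P δ),
        TensorProduct.map (LinearMap.id : H →ₗ[k] H) (coinvSub k H P δ).subtype t
          ∈ LinearMap.range (PhiMap k H P δ γ') := by
      intro t
      induction t using TensorProduct.induction_on with
      | zero => simp only [_root_.map_zero]; exact Submodule.zero_mem _
      | add u v hu hv => simp only [_root_.map_add]; exact Submodule.add_mem _ hu hv
      | tmul h m =>
        refine LinearMap.mem_range.2 ⟨γ h * (m : P), ?_⟩
        rw [phi_gamma δ γ γ' hmulc hcolin hconv₂ h (m : P) m.2]
        simp
    rintro y hy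
    obtain ⟨t, rfl⟩ := LinearMap.mem_range.1 hy
    exact key t

end Main5

section Main6
variable {k : Type*} [Field k] {H : Type*} [Ring H] [HopfAlgebra k H]
  {P : Type*} [Ring P] [Algebra k P]

/-- `b₁ ⊗ b₂ ↦ (id ⊗ γ'·) (b₁ b₂)` : the "multiply then γ' the middle" map. -/
def mhat (γ' : H →ₗ[k] P) :
    (H ⊗[k] (H ⊗[k] P)) ⊗[k] (H ⊗[k] (H ⊗[k] P)) →ₗ[k] H ⊗[k] P :=
  TensorProduct.map LinearMap.id (wmap γ') ∘ₗ LinearMap.mul' k (H ⊗[k] (H ⊗[k] P))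

/-- `(a⊗(b⊗c))⊗x ↦ a⊗(b⊗γ(c)x)`. -/
def Vmap (γ : H →ₗ[k] P) : (H ⊗[k] (H ⊗[k] H)) ⊗[k] P →ₗ[k] H ⊗[k] (H ⊗[k] P) :=
  TensorProduct.map LinearMap.id (TensorProduct.map LinearMap.id (psimap γ))
    ∘ₗ TensorProduct.map LinearMap.id (TensorProduct.assoc k H H P).toLinearMap
    ∘ₗ (TensorProduct.assoc k H (H ⊗[k] H) P).toLinearMap

/-- the tail of `muGamma` after the two `comul3R`s. -/
def OmegaMap (γ γ' : H →ₗ[k] P) :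
    ((H ⊗[k] (H ⊗[k] H)) ⊗[k] P) ⊗[k] ((H ⊗[k] (H ⊗[k] H)) ⊗[k] P) →ₗ[k] H ⊗[k] P :=
  TensorProduct.map LinearMap.id (collectTwo k P)
    ∘ₗ (TensorProduct.assoc k H (P ⊗[k] P) (P ⊗[k] P)).toLinearMap
    ∘ₗ TensorProduct.map (muLeftPart k H P γ γ') LinearMap.id
    ∘ₗ (TensorProduct.tensorTensorTensorComm k (H ⊗[k] (H ⊗[k] H)) P
          (H ⊗[k] (H ⊗[k] H)) P).toLinearMap

lemma muGamma_tmul (γ γ' : H →ₗ[k] P) (x y : H ⊗[k] P) :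
    muGamma k H P γ γ' (x ⊗ₜ[k] y)
      = OmegaMap γ γ' ((TensorProduct.map (comul3R k H) LinearMap.id x)
          ⊗ₜ[k] (TensorProduct.map (comul3R k H) LinearMap.id y)) := rfl

lemma OmegaEq (γ γ' : H →ₗ[k] P) :
    OmegaMap γ γ' = mhat γ' ∘ₗ TensorProduct.map (Vmap γ) (Vmap γ) := by
  apply TensorProduct.ext'; intro u v
  induction u using TensorProduct.induction_on with
  | zero => simp only [zero_tmul, _root_.map_zero]
  | add u₁ u₂ h1 h2 => simp only [add_tmul, _root_.map_add, h1, h2]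
  | tmul t x =>
    induction t using TensorProduct.induction_on with
    | zero => simp only [zero_tmul, _root_.map_zero]
    | add t₁ t₂ h1 h2 => simp only [add_tmul, _root_.map_add, h1, h2]
    | tmul a s =>
      induction s using TensorProduct.induction_on with
      | zero => simp only [tmul_zero, zero_tmul, _root_.map_zero]
      | add s₁ s₂ h1 h2 => simp only [tmul_add, add_tmul, _root_.map_add, h1, h2]
      | tmul b c =>
        induction v using TensorProduct.induction_on with
        | zero => simp only [tmul_zero, _root_.map_zero]
        | add v₁ v₂ h1 h2 => simp only [tmul_add, _root_.map_add, h1, h2]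
        | tmul t' y =>
          induction t' using TensorProduct.induction_on with
          | zero => simp only [zero_tmul, tmul_zero, _root_.map_zero]
          | add t₁ t₂ h1 h2 => simp only [add_tmul, tmul_add, _root_.map_add, h1, h2]
          | tmul d s' =>
            induction s' using TensorProduct.induction_on with
            | zero => simp only [tmul_zero, zero_tmul, _root_.map_zero]
            | add s₁ s₂ h1 h2 => simp only [tmul_add, add_tmul, _root_.map_add, h1, h2]
            | tmul e f =>
              simp [OmegaMap, mhat, Vmap, muLeftPart, thetaTwo, collectTwo, wmap, psimap,
                tensorTensorTensorComm_tmul, Algebra.TensorProduct.tmul_mul_tmul,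
                mul_assoc]

end Main6

section Main7
variable {k : Type*} [Field k] {H : Type*} [Ring H] [HopfAlgebra k H]
  {P : Type*} [Ring P] [Algebra k P]
  (δ : P →ₗ[k] H ⊗[k] P) (γ γ' : H →ₗ[k] P)

lemma d2_mul (hmulc : ∀ p q : P, δ (p * q) = δ p * δ q) (p q : P) :
    d2 δ (p * q) = d2 δ p * d2 δ q := by
  have sub : ∀ t s : H ⊗[k] P,
      TensorProduct.map LinearMap.id δ (t * s)
        = TensorProduct.map LinearMap.id δ t * TensorProduct.map LinearMap.id δ s := by
    intro t s
    induction t using TensorProduct.induction_on with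
    | zero => simp
    | add u v hu hv => simp only [add_mul, _root_.map_add, hu, hv]
    | tmul h x =>
      induction s using TensorProduct.induction_on with
      | zero => simp
      | add u v hu hv => simp only [mul_add, _root_.map_add, hu, hv]
      | tmul g y =>
        simp [Algebra.TensorProduct.tmul_mul_tmul, hmulc]
  show TensorProduct.map LinearMap.id δ (δ (p * q)) = _
  rw [hmulc, sub]
  rfl

lemma phi_mul_d2 (hmulc : ∀ p q : P, δ (p * q) = δ p * δ q) (p q : P) :
    PhiMap k H P δ γ' (p * q) = mhat γ' ((d2 δ p) ⊗ₜ[k] (d2 δ q)) := by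
  rw [PhiMap_apply]
  show TensorProduct.map LinearMap.id (wmap γ') (d2 δ (p * q)) = _
  rw [d2_mul δ hmulc p q]
  rw [mhat]
  simp only [LinearMap.comp_apply, LinearMap.mul'_apply]

/-- The `U = d2` identity. -/
lemma U_eq_d2
    (hcoassoc : (TensorProduct.map (Coalgebra.comul (R := k) (A := H)) LinearMap.id) ∘ₗ δ
      = (TensorProduct.assoc k H H P).symm.toLinearMap
          ∘ₗ (TensorProduct.map LinearMap.id δ) ∘ₗ δ)
    (hcounit : ∀ p : P,
      (TensorProduct.lid k P)
        ((TensorProduct.map (Coalgebra.counit (R := k) (A := H)) LinearMap.id) (δ p)) = p)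
    (hconv₁ : (LinearMap.mul' k P) ∘ₗ TensorProduct.map γ γ'
          ∘ₗ (Coalgebra.comul (R := k) (A := H))
        = (Algebra.linearMap k P) ∘ₗ (Coalgebra.counit (R := k) (A := H)))
    (p : P) :
    Vmap γ (TensorProduct.map (comul3R k H) LinearMap.id (PhiMap k H P δ γ' p))
      = d2 δ p := by
  have hphi := LinearMap.congr_fun (PhiMap_eq' δ γ') p
  simp only [LinearMap.comp_apply] at hphi
  rw [hphi]
  -- (b) commute
  have stepb : ∀ t : H ⊗[k] P,
      TensorProduct.map (comul3R k H) LinearMap.id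
          (TensorProduct.map LinearMap.id (thetaMap δ γ') t)
        = TensorProduct.map LinearMap.id (thetaMap δ γ')
            (TensorProduct.map (comul3R k H) LinearMap.id t) := by
    intro t
    induction t using TensorProduct.induction_on with
    | zero => simp
    | add u v hu hv => simp only [_root_.map_add, hu, hv]
    | tmul h x => simp
  rw [stepb]
  -- (d) expand comul3R
  have stepd : ∀ t : H ⊗[k] P,
      TensorProduct.map (comul3R k H) LinearMap.id t
        = TensorProduct.map
            (TensorProduct.map LinearMap.id (Coalgebra.comul (R := k) (A := H)))
            LinearMap.id
            (TensorProduct.map (Coalgebra.comul (R := k) (A := H)) LinearMap.id t) := by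
    intro t
    induction t using TensorProduct.induction_on with
    | zero => simp
    | add u v hu hv => simp only [_root_.map_add, hu, hv]
    | tmul h x => simp [comul3R]
  rw [stepd]
  -- (e) hcoassoc
  have h3 := LinearMap.congr_fun hcoassoc p
  simp only [LinearMap.comp_apply, LinearEquiv.coe_coe] at h3
  rw [h3]
  -- (f) naturality
  have stepf : ∀ v : H ⊗[k] (H ⊗[k] P),
      TensorProduct.map
          (TensorProduct.map LinearMap.id (Coalgebra.comul (R := k) (A := H)))
          LinearMap.id ((TensorProduct.assoc k H H P).symm v)
        = (TensorProduct.assoc k H (H ⊗[k] H) P).symm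
            (TensorProduct.map LinearMap.id
              (TensorProduct.map (Coalgebra.comul (R := k) (A := H)) LinearMap.id) v) := by
    intro v
    induction v using TensorProduct.induction_on with
    | zero => simp
    | add u v hu hv => simp only [_root_.map_add, hu, hv]
    | tmul a s =>
      induction s using TensorProduct.induction_on with
      | zero => simp
      | add u v hu hv => simp only [tmul_add, _root_.map_add, hu, hv]
      | tmul b x => simp
  rw [stepf]
  -- (g) inner coassoc
  have stepg : TensorProduct.map LinearMap.id
        (TensorProduct.map (Coalgebra.comul (R := k) (A := H)) LinearMap.id)
        (TensorProduct.map LinearMap.id δ (δ p))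
      = TensorProduct.map LinearMap.id (TensorProduct.assoc k H H P).symm.toLinearMap
          (TensorProduct.map LinearMap.id (TensorProduct.map LinearMap.id δ)
            (TensorProduct.map LinearMap.id δ (δ p))) := by
    have inner : ∀ t : H ⊗[k] P,
        TensorProduct.map LinearMap.id
            (TensorProduct.map (Coalgebra.comul (R := k) (A := H)) LinearMap.id)
            (TensorProduct.map LinearMap.id δ t)
          = TensorProduct.map LinearMap.id (TensorProduct.assoc k H H P).symm.toLinearMap
              (TensorProduct.map LinearMap.id (TensorProduct.map LinearMap.id δ)
                (TensorProduct.map LinearMap.id δ t)) := by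
      intro t
      induction t using TensorProduct.induction_on with
      | zero => simp
      | add u v hu hv => simp only [_root_.map_add, hu, hv]
      | tmul h x =>
        simp only [map_tmul, LinearMap.id_coe, id_eq]
        congr 1
        have hx := LinearMap.congr_fun hcoassoc x
        simp only [LinearMap.comp_apply, LinearEquiv.coe_coe] at hx
        rw [hx]
        rfl
    exact inner (δ p)
  rw [stepg]
  -- (i) structural collapse
  have stepi : ∀ v : H ⊗[k] (H ⊗[k] (H ⊗[k] P)),
      Vmap γ (TensorProduct.map LinearMap.id (thetaMap δ γ')
        ((TensorProduct.assoc k H (H ⊗[k] H) P).symm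
          (TensorProduct.map LinearMap.id (TensorProduct.assoc k H H P).symm.toLinearMap v)))
      = TensorProduct.map LinearMap.id
          (TensorProduct.map LinearMap.id
            (psimap γ ∘ₗ TensorProduct.map LinearMap.id (thetaMap δ γ'))) v := by
    intro v
    induction v using TensorProduct.induction_on with
    | zero => simp
    | add u v hu hv => simp only [_root_.map_add, hu, hv]
    | tmul a s =>
      induction s using TensorProduct.induction_on with
      | zero => simp
      | add u v hu hv => simp only [tmul_add, _root_.map_add, hu, hv]
      | tmul b u =>
        induction u using TensorProduct.induction_on with
        | zero => simp [Vmap]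
        | add u₁ u₂ hu hv => simp only [tmul_add, _root_.map_add, hu, hv]
        | tmul c x => simp [Vmap]
  rw [stepi]
  -- (j) final collapse via psi_phi
  have stepj : ∀ t : H ⊗[k] (H ⊗[k] P),
      TensorProduct.map LinearMap.id
          (TensorProduct.map LinearMap.id
            (psimap γ ∘ₗ TensorProduct.map LinearMap.id (thetaMap δ γ')))
          (TensorProduct.map LinearMap.id (TensorProduct.map LinearMap.id δ) t)
        = t := by
    intro t
    induction t using TensorProduct.induction_on with
    | zero => simp
    | add u v hu hv => simp only [_root_.map_add, hu, hv]
    | tmul a u =>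
      induction u using TensorProduct.induction_on with
      | zero => simp
      | add u₁ u₂ hu hv => simp only [tmul_add, _root_.map_add, hu, hv]
      | tmul b x =>
        simp only [map_tmul, LinearMap.id_coe, id_eq, LinearMap.comp_apply]
        have : TensorProduct.map LinearMap.id (thetaMap δ γ') (δ x)
            = PhiMap k H P δ γ' x := (LinearMap.congr_fun (PhiMap_eq' δ γ') x).symm
        rw [this, psi_phi δ γ γ' hcoassoc hcounit hconv₁ x]
  exact stepj (TensorProduct.map LinearMap.id δ (δ p))

lemma phi_mul
    (hcoassoc : (TensorProduct.map (Coalgebra.comul (R := k) (A := H)) LinearMap.id) ∘ₗ δ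
      = (TensorProduct.assoc k H H P).symm.toLinearMap
          ∘ₗ (TensorProduct.map LinearMap.id δ) ∘ₗ δ)
    (hcounit : ∀ p : P,
      (TensorProduct.lid k P)
        ((TensorProduct.map (Coalgebra.counit (R := k) (A := H)) LinearMap.id) (δ p)) = p)
    (hmulc : ∀ p q : P, δ (p * q) = δ p * δ q)
    (hconv₁ : (LinearMap.mul' k P) ∘ₗ TensorProduct.map γ γ'
          ∘ₗ (Coalgebra.comul (R := k) (A := H))
        = (Algebra.linearMap k P) ∘ₗ (Coalgebra.counit (R := k) (A := H)))
    (p q : P) :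
    PhiMap k H P δ γ' (p * q)
      = muGamma k H P γ γ' (PhiMap k H P δ γ' p ⊗ₜ[k] PhiMap k H P δ γ' q) := by
  rw [phi_mul_d2 δ γ' hmulc p q, muGamma_tmul,
    ← U_eq_d2 δ γ γ' hcoassoc hcounit hconv₁ p,
    ← U_eq_d2 δ γ γ' hcoassoc hcounit hconv₁ q]
  rw [LinearMap.congr_fun (OmegaEq γ γ')
    ((TensorProduct.map (comul3R k H) LinearMap.id (PhiMap k H P δ γ' p))
      ⊗ₜ[k] (TensorProduct.map (comul3R k H) LinearMap.id (PhiMap k H P δ γ' q)))]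
  simp only [LinearMap.comp_apply, map_tmul]

end Main7

section Main8
variable {k : Type*} [Field k] {H : Type*} [Ring H] [HopfAlgebra k H]
  {P : Type*} [Ring P] [Algebra k P]
  (γ γ' : H →ₗ[k] P)

/-- `(a⊗(b⊗c))⊗m ↦ a ⊗ (γ'(b)γ(c))m`. -/
def XiMap : (H ⊗[k] (H ⊗[k] H)) ⊗[k] P →ₗ[k] H ⊗[k] P :=
  TensorProduct.map LinearMap.id
      (LinearMap.mul' k P
        ∘ₗ TensorProduct.map (LinearMap.mul' k P ∘ₗ TensorProduct.map γ' γ) LinearMap.id)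
    ∘ₗ (TensorProduct.assoc k H (H ⊗[k] H) P).toLinearMap

lemma Xi_comul3R
    (hconv₂ : (LinearMap.mul' k P) ∘ₗ TensorProduct.map γ' γ
          ∘ₗ (Coalgebra.comul (R := k) (A := H))
        = (Algebra.linearMap k P) ∘ₗ (Coalgebra.counit (R := k) (A := H)))
    (g : H) (m : P) :
    XiMap γ γ' ((comul3R k H g) ⊗ₜ[k] m) = g ⊗ₜ[k] m := by
  have hc3 : comul3R k H g = TensorProduct.map LinearMap.id (Coalgebra.comul (R := k))
      (Coalgebra.comul (R := k) g) := rfl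
  rw [hc3]
  have key : ∀ s : H ⊗[k] H,
      XiMap γ γ' ((TensorProduct.map LinearMap.id (Coalgebra.comul (R := k)) s) ⊗ₜ[k] m)
        = TensorProduct.map LinearMap.id
            (LinearMap.toSpanSingleton k P m ∘ₗ (Coalgebra.counit (R := k) (A := H))) s := by
    intro s
    induction s using TensorProduct.induction_on with
    | zero => simp
    | add u v hu hv => simp only [_root_.map_add, add_tmul, hu, hv]
    | tmul a b =>
      simp only [map_tmul, LinearMap.id_coe, id_eq, XiMap, LinearMap.comp_apply,
        LinearEquiv.coe_coe, assoc_tmul]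
      have hb := LinearMap.congr_fun hconv₂ b
      simp only [LinearMap.comp_apply] at hb
      simp [hb, Algebra.algebraMap_eq_smul_one, LinearMap.toSpanSingleton_apply,
        smul_mul_assoc, tmul_smul]
  rw [key]
  have claim4 : TensorProduct.map LinearMap.id
        (LinearMap.toSpanSingleton k P m ∘ₗ (Coalgebra.counit (R := k) (A := H)))
        (Coalgebra.comul (R := k) g)
      = TensorProduct.map LinearMap.id (LinearMap.toSpanSingleton k P m)
          (TensorProduct.map LinearMap.id (Coalgebra.counit (R := k) (A := H))
            (Coalgebra.comul (R := k) g)) := by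
    generalize Coalgebra.comul (R := k) g = s
    induction s using TensorProduct.induction_on with
    | zero => simp
    | add u v hu hv => simp only [_root_.map_add, hu, hv]
    | tmul a b => simp
  rw [claim4]
  have hcu : TensorProduct.map LinearMap.id (Coalgebra.counit (R := k) (A := H))
      (Coalgebra.comul (R := k) g) = g ⊗ₜ[k] (1 : k) := by
    have := LinearMap.congr_fun (Coalgebra.lTensor_counit_comp_comul (R := k) (A := H)) g
    simp only [LinearMap.comp_apply] at this
    rw [show TensorProduct.map LinearMap.id (Coalgebra.counit (R := k) (A := H))
      = (Coalgebra.counit (R := k) (A := H)).lTensor H from rfl, this]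
    rfl
  rw [hcu]
  simp [LinearMap.toSpanSingleton_apply]

lemma comul3R_one : comul3R k H (1 : H) = (1 : H) ⊗ₜ[k] ((1 : H) ⊗ₜ[k] (1 : H)) := by
  show TensorProduct.map LinearMap.id (Coalgebra.comul (R := k))
      (Coalgebra.comul (R := k) (1 : H)) = _
  rw [Bialgebra.comul_one, Algebra.TensorProduct.one_def]
  simp [Bialgebra.comul_one, Algebra.TensorProduct.one_def]

lemma mu_one_left
    (hγone : γ 1 = 1)
    (hconv₂ : (LinearMap.mul' k P) ∘ₗ TensorProduct.map γ' γ
          ∘ₗ (Coalgebra.comul (R := k) (A := H))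
        = (Algebra.linearMap k P) ∘ₗ (Coalgebra.counit (R := k) (A := H)))
    (x : H ⊗[k] P) :
    muGamma k H P γ γ' (((1 : H) ⊗ₜ[k] (1 : P)) ⊗ₜ[k] x) = x := by
  have keyL : ∀ (t : H ⊗[k] (H ⊗[k] H)) (m : P),
      OmegaMap γ γ' ((((1 : H) ⊗ₜ[k] ((1 : H) ⊗ₜ[k] (1 : H))) ⊗ₜ[k] (1 : P))
          ⊗ₜ[k] (t ⊗ₜ[k] m))
        = XiMap γ γ' (t ⊗ₜ[k] m) := by
    intro t m
    induction t using TensorProduct.induction_on with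
    | zero => simp
    | add u v hu hv => simp only [add_tmul, tmul_add, _root_.map_add, hu, hv]
    | tmul a s =>
      induction s using TensorProduct.induction_on with
      | zero => simp
      | add u v hu hv => simp only [add_tmul, tmul_add, _root_.map_add, hu, hv]
      | tmul b c =>
        simp [OmegaMap, XiMap, muLeftPart, thetaTwo, collectTwo,
          tensorTensorTensorComm_tmul, hγone, Algebra.TensorProduct.tmul_mul_tmul,
          mul_assoc]
  induction x using TensorProduct.induction_on with
  | zero => simp
  | add u v hu hv => simp only [tmul_add, _root_.map_add, hu, hv]
  | tmul g m =>
    rw [muGamma_tmul]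
    simp only [map_tmul, LinearMap.id_coe, id_eq, comul3R_one]
    rw [keyL, Xi_comul3R γ γ' hconv₂]

lemma mu_one_right
    (hγone : γ 1 = 1)
    (hconv₂ : (LinearMap.mul' k P) ∘ₗ TensorProduct.map γ' γ
          ∘ₗ (Coalgebra.comul (R := k) (A := H))
        = (Algebra.linearMap k P) ∘ₗ (Coalgebra.counit (R := k) (A := H)))
    (x : H ⊗[k] P) :
    muGamma k H P γ γ' (x ⊗ₜ[k] ((1 : H) ⊗ₜ[k] (1 : P))) = x := by
  have keyR : ∀ (t : H ⊗[k] (H ⊗[k] H)) (n : P),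
      OmegaMap γ γ' ((t ⊗ₜ[k] n)
          ⊗ₜ[k] (((1 : H) ⊗ₜ[k] ((1 : H) ⊗ₜ[k] (1 : H))) ⊗ₜ[k] (1 : P)))
        = XiMap γ γ' (t ⊗ₜ[k] n) := by
    intro t n
    induction t using TensorProduct.induction_on with
    | zero => simp
    | add u v hu hv => simp only [add_tmul, tmul_add, _root_.map_add, hu, hv]
    | tmul a s =>
      induction s using TensorProduct.induction_on with
      | zero => simp
      | add u v hu hv => simp only [add_tmul, tmul_add, _root_.map_add, hu, hv]
      | tmul b c =>
        simp [OmegaMap, XiMap, muLeftPart, thetaTwo, collectTwo,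
          tensorTensorTensorComm_tmul, hγone, Algebra.TensorProduct.tmul_mul_tmul,
          mul_assoc]
  induction x using TensorProduct.induction_on with
  | zero => simp
  | add u v hu hv => simp only [add_tmul, _root_.map_add, hu, hv]
  | tmul h n =>
    rw [muGamma_tmul]
    simp only [map_tmul, LinearMap.id_coe, id_eq, comul3R_one]
    rw [keyR, Xi_comul3R γ γ' hconv₂]

end Main8

/-- For a cleft extension `N ⊆ P` with cleaving map `γ`, the product
`(h ⊗ n)(g ⊗ m) = h₁g₁ ⊗ γ⁻¹(h₂g₂)γ(h₃)nγ(g₃)m` makes `H ⊗ N = H #^γ N` an associative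
unital algebra, and `Φ(p) = p₍₋₂₎ ⊗ γ⁻¹(p₍₋₁₎)p₍₀₎` is an isomorphism of left `H`-comodule
algebras `P ≅ H #^γ N`. -/
theorem stmt15 (k : Type*) [Field k] (H : Type*) [Ring H] [HopfAlgebra k H]
    (P : Type*) [Ring P] [Algebra k P]
    (δ : P →ₗ[k] H ⊗[k] P)
    (hcoassoc : (TensorProduct.map (Coalgebra.comul (R := k) (A := H)) LinearMap.id) ∘ₗ δ
      = (TensorProduct.assoc k H H P).symm.toLinearMap
          ∘ₗ (TensorProduct.map LinearMap.id δ) ∘ₗ δ)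
    (hcounit : ∀ p : P,
      (TensorProduct.lid k P)
        ((TensorProduct.map (Coalgebra.counit (R := k) (A := H)) LinearMap.id) (δ p)) = p)
    (hmulc : ∀ p q : P, δ (p * q) = δ p * δ q)
    (hone : δ 1 = 1)
    (γ γ' : H →ₗ[k] P)
    (hγone : γ 1 = 1)
    (hcolin : δ ∘ₗ γ
      = TensorProduct.map LinearMap.id γ ∘ₗ (Coalgebra.comul (R := k) (A := H)))
    (hconv₁ : (LinearMap.mul' k P) ∘ₗ TensorProduct.map γ γ'
          ∘ₗ (Coalgebra.comul (R := k) (A := H))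
        = (Algebra.linearMap k P) ∘ₗ (Coalgebra.counit (R := k) (A := H)))
    (hconv₂ : (LinearMap.mul' k P) ∘ₗ TensorProduct.map γ' γ
          ∘ₗ (Coalgebra.comul (R := k) (A := H))
        = (Algebra.linearMap k P) ∘ₗ (Coalgebra.counit (R := k) (A := H))) :
    -- the product preserves `H ⊗ N`
    (∀ (h g : H) (n m : P), n ∈ coinvSub k H P δ → m ∈ coinvSub k H P δ →
      muGamma k H P γ γ' ((h ⊗ₜ[k] n) ⊗ₜ[k] (g ⊗ₜ[k] m)) ∈
        LinearMap.range
          (TensorProduct.map (LinearMap.id : H →ₗ[k] H) (coinvSub k H P δ).subtype))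
    -- associativity on `H ⊗ N`
    ∧ (∀ (h g l : H) (n m o : P), n ∈ coinvSub k H P δ → m ∈ coinvSub k H P δ →
        o ∈ coinvSub k H P δ →
        muGamma k H P γ γ'
            ((muGamma k H P γ γ' ((h ⊗ₜ[k] n) ⊗ₜ[k] (g ⊗ₜ[k] m))) ⊗ₜ[k] (l ⊗ₜ[k] o))
          = muGamma k H P γ γ'
            ((h ⊗ₜ[k] n) ⊗ₜ[k] (muGamma k H P γ γ' ((g ⊗ₜ[k] m) ⊗ₜ[k] (l ⊗ₜ[k] o)))))
    -- unitality
    ∧ (∀ x : H ⊗[k] P, muGamma k H P γ γ' (((1 : H) ⊗ₜ[k] (1 : P)) ⊗ₜ[k] x) = x)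
    ∧ (∀ x : H ⊗[k] P, muGamma k H P γ γ' (x ⊗ₜ[k] ((1 : H) ⊗ₜ[k] (1 : P))) = x)
    -- Φ is an isomorphism of comodule algebras onto `H #^γ N`
    ∧ Function.Injective (PhiMap k H P δ γ')
    ∧ LinearMap.range (PhiMap k H P δ γ')
        = LinearMap.range
            (TensorProduct.map (LinearMap.id : H →ₗ[k] H) (coinvSub k H P δ).subtype)
    ∧ (∀ p q : P, PhiMap k H P δ γ' (p * q)
        = muGamma k H P γ γ' (PhiMap k H P δ γ' p ⊗ₜ[k] PhiMap k H P δ γ' q))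
    ∧ PhiMap k H P δ γ' 1 = (1 : H) ⊗ₜ[k] (1 : P)
    ∧ (TensorProduct.assoc k H H P).toLinearMap
        ∘ₗ TensorProduct.map (Coalgebra.comul (R := k) (A := H)) LinearMap.id
        ∘ₗ PhiMap k H P δ γ'
      = TensorProduct.map LinearMap.id (PhiMap k H P δ γ') ∘ₗ δ := by
  refine ⟨?_, ?_, ?_, ?_, ?_, ?_, ?_, ?_, ?_⟩
  · -- closure
    intro h g n m hn hm
    rw [← phi_gamma δ γ γ' hmulc hcolin hconv₂ h n hn,
      ← phi_gamma δ γ γ' hmulc hcolin hconv₂ g m hm,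
      ← phi_mul δ γ γ' hcoassoc hcounit hmulc hconv₁]
    exact phi_mem δ γ γ' hcoassoc hcounit hmulc hone hcolin hconv₁ hconv₂ _
  · -- associativity
    intro h g l n m o hn hm ho
    rw [← phi_gamma δ γ γ' hmulc hcolin hconv₂ h n hn,
      ← phi_gamma δ γ γ' hmulc hcolin hconv₂ g m hm,
      ← phi_gamma δ γ γ' hmulc hcolin hconv₂ l o ho,
      ← phi_mul δ γ γ' hcoassoc hcounit hmulc hconv₁,
      ← phi_mul δ γ γ' hcoassoc hcounit hmulc hconv₁,
      ← phi_mul δ γ γ' hcoassoc hcounit hmulc hconv₁,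
      ← phi_mul δ γ γ' hcoassoc hcounit hmulc hconv₁,
      mul_assoc]
  · exact mu_one_left γ γ' hγone hconv₂
  · exact mu_one_right γ γ' hγone hconv₂
  · exact phi_injective δ γ γ' hcoassoc hcounit hconv₁
  · exact range_eq δ γ γ' hcoassoc hcounit hmulc hone hcolin hconv₁ hconv₂
  · exact phi_mul δ γ γ' hcoassoc hcounit hmulc hconv₁
  · exact phi_one δ γ γ' hone hγone hconv₂
  · exact phi_colinear δ γ' hcoassoc
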